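/- arXiv:2004.11631 — 2 statements merged into one kernel-verified Lean document; each statement's English description precedes it below -/
import Mathlib

section
/- Let X be a real Banach space, let G be a compact topological group acting separately continuously on X by continuous linear operators via a homomorphism ρ, and let K ⊆ X be a nonempty closed convex balanced G-invariant set (balanced: λK ⊆ K for every real λ with |λ| ≤ 1). If z ∈ X \ K, then there exists a homogeneous G-invariant continuous polynomial P on X that separates z from K, i.e. sup_{w∈K}|P(w)| < |P(z)|. -/
/-- An `m`-homogeneous continuous polynomial: `P x = A (x, …, x)` for a single continuous
`m`-linear map `A`. -/
def IsHomogeneousPolynomial (𝕜 : Type*) [NontriviallyNormedField 𝕜] {X : Type*}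
    [NormedAddCommGroup X] [NormedSpace 𝕜 X] (m : ℕ) (P : X → 𝕜) : Prop :=
  ∃ A : ContinuousMultilinearMap 𝕜 (fun _ : Fin m => X) 𝕜, ∀ x, P x = A (fun _ => x)

/-!
Hahn–Banach gives a functional `f` with `|f| ≤ u` on the balanced set `K` and `u < f z`.
Average its powers over the Haar measure: `P x = ∫ f (ρ g⁻¹ x) ^ n dg` is `G`-invariant, and it
comes from a continuous `n`-linear form because Banach–Steinhaus bounds the operators `ρ g`
uniformly. On `K` we have `|P| ≤ μ(G) uⁿ`, while for even `n` we have `P z ≥ μ(U) u'ⁿ`, where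
`u < u' < f z` and `U = {g | u' < f (ρ g⁻¹ z)}` is an open neighbourhood of `1`, of positive
Haar measure. For `n` large, the second bound beats the first.
-/

open MeasureTheory Filter Topology

theorem Balanced.exists_abs_le_lt_of_notMem {X : Type*} [AddCommGroup X] [Module ℝ X]
    [TopologicalSpace X] [IsTopologicalAddGroup X] [ContinuousSMul ℝ X] [LocallyConvexSpace ℝ X]
    {K : Set X} (hbal : Balanced ℝ K) (hcv : Convex ℝ K) (hcl : IsClosed K) {z : X} (hz : z ∉ K) :
    ∃ (f : StrongDual ℝ X) (u : ℝ), (∀ w ∈ K, |f w| ≤ u) ∧ u < f z := by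
  obtain ⟨f, u, hfK, hfz⟩ := geometric_hahn_banach_closed_point hcv hcl hz
  refine ⟨f, u, fun w hw => abs_le.2 ⟨?_, (hfK w hw).le⟩, hfz⟩
  have := hfK (-w) (hbal.neg_mem_iff.2 hw)
  rw [map_neg] at this
  linarith

theorem exists_mul_pow_lt_mul_pow {a b v v' : ℝ} (hb : 0 < b) (hv : 0 ≤ v) (hvv' : v < v') :
    ∃ n : ℕ, a * v ^ n < b * v' ^ n := by
  have hv' : 0 < v' := hv.trans_lt hvv'
  have hlim : Tendsto (fun n : ℕ => a * (v / v') ^ n) atTop (𝓝 (a * 0)) :=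
    (tendsto_pow_atTop_nhds_zero_of_lt_one (div_nonneg hv hv'.le)
      ((div_lt_one hv').2 hvv')).const_mul a
  rw [mul_zero] at hlim
  obtain ⟨n, hn⟩ := (hlim.eventually (gt_mem_nhds hb)).exists
  refine ⟨n, ?_⟩
  rwa [div_pow, ← mul_div_assoc, div_lt_iff₀ (pow_pos hv' n)] at hn

theorem exists_forall_norm_le_of_continuous_apply {𝕜 E F G : Type*} [NontriviallyNormedField 𝕜]
    [NormedAddCommGroup E] [NormedSpace 𝕜 E] [CompleteSpace E] [NormedAddCommGroup F]
    [NormedSpace 𝕜 F] [TopologicalSpace G] [CompactSpace G] {T : G → E →L[𝕜] F}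
    (hT : ∀ x, Continuous fun g => T g x) : ∃ C, ∀ g, ‖T g‖ ≤ C :=
  banach_steinhaus fun x =>
    let ⟨C, hC⟩ := (isCompact_range (hT x).norm).bddAbove
    ⟨C, fun g => hC ⟨g, rfl⟩⟩

theorem norm_integral_pow_le {G : Type*} [MeasurableSpace G] (μ : Measure G)
    [IsFiniteMeasure μ] {b : G → ℝ} {u : ℝ} (hb : ∀ g, |b g| ≤ u) (n : ℕ) :
    ‖∫ g, b g ^ n ∂μ‖ ≤ μ.real Set.univ * u ^ n := by
  rw [mul_comm]
  refine norm_integral_le_of_norm_le_const (ae_of_all _ fun g => ?_)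
  rw [norm_pow, Real.norm_eq_abs]
  exact pow_le_pow_left₀ (abs_nonneg _) (hb g) n

section Averaging

variable {G : Type*} [TopologicalSpace G] [CompactSpace G] [MeasurableSpace G]
  [OpensMeasurableSpace G] (μ : Measure G) [IsFiniteMeasure μ]

theorem ContinuousMultilinearMap.exists_apply_eq_integral {ι : Type*} [Fintype ι]
    {E : ι → Type*} [∀ i, NormedAddCommGroup (E i)] [∀ i, NormedSpace ℝ (E i)]
    {F : Type*} [NormedAddCommGroup F] [NormedSpace ℝ F] [CompleteSpace F]
    {L : G → ContinuousMultilinearMap ℝ E F} (hL : ∀ y, Continuous fun g => L g y) {C : ℝ}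
    (hC : ∀ g, ‖L g‖ ≤ C) :
    ∃ A : ContinuousMultilinearMap ℝ E F, ∀ y, A y = ∫ g, L g y ∂μ := by
  let A₀ : MultilinearMap ℝ E F :=
    { toFun := fun y => ∫ g, L g y ∂μ
      map_update_add' := fun y i a b => by
        simp only [ContinuousMultilinearMap.map_update_add]
        exact integral_add ((hL _).integrable_of_hasCompactSupport (.of_compactSpace _))
          ((hL _).integrable_of_hasCompactSupport (.of_compactSpace _))
      map_update_smul' := fun y i c a => by
        simp only [ContinuousMultilinearMap.map_update_smul]
        exact integral_smul c _ }
  have hbound : ∀ y, ‖A₀ y‖ ≤ (C * μ.real Set.univ) * ∏ i, ‖y i‖ := fun y =>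
    calc ‖∫ g, L g y ∂μ‖ ≤ (C * ∏ i, ‖y i‖) * μ.real Set.univ :=
          norm_integral_le_of_norm_le_const (ae_of_all _ fun g =>
            (L g).le_of_opNorm_le (hC g) y)
      _ = (C * μ.real Set.univ) * ∏ i, ‖y i‖ := by ring
  exact ⟨A₀.mkContinuous _ hbound, fun y => rfl⟩

theorem isHomogeneousPolynomial_integral_pow {X : Type*} [NormedAddCommGroup X]
    [NormedSpace ℝ X] [CompleteSpace X] {φ : G → StrongDual ℝ X}
    (hφ : ∀ x, Continuous fun g => φ g x) (n : ℕ) :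
    IsHomogeneousPolynomial ℝ n fun x => ∫ g, φ g x ^ n ∂μ := by
  obtain ⟨C, hC⟩ := exists_forall_norm_le_of_continuous_apply hφ
  let L : G → ContinuousMultilinearMap ℝ (fun _ : Fin n => X) ℝ := fun g =>
    (ContinuousMultilinearMap.mkPiAlgebra ℝ (Fin n) ℝ).compContinuousLinearMap fun _ => φ g
  have hL : ∀ g y, L g y = ∏ i, φ g (y i) := fun g y => by simp [L]
  have hLC : ∀ g, ‖L g‖ ≤ C ^ n := fun g =>
    calc ‖L g‖ ≤ ‖ContinuousMultilinearMap.mkPiAlgebra ℝ (Fin n) ℝ‖ * ∏ _i : Fin n, ‖φ g‖ :=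
          ContinuousMultilinearMap.norm_compContinuousLinearMap_le _ _
      _ ≤ C ^ n := by
          rw [ContinuousMultilinearMap.norm_mkPiAlgebra, one_mul, Finset.prod_const,
            Finset.card_fin]
          exact pow_le_pow_left₀ (norm_nonneg _) (hC g) n
  obtain ⟨A, hA⟩ := ContinuousMultilinearMap.exists_apply_eq_integral μ
    (fun y => by simpa only [hL] using continuous_finsetProd _ fun i _ => hφ (y i)) hLC
  exact ⟨A, fun x => by simp [hA, hL]⟩

-- Even exponents keep the integrand nonnegative off `U`.
theorem exists_mul_pow_lt_integral_pow [μ.IsOpenPosMeasure] {a : G → ℝ} (ha : Continuous a)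
    {u : ℝ} (hu : 0 ≤ u) {g₀ : G} (hua : u < a g₀) :
    ∃ n, μ.real Set.univ * u ^ n < ∫ g, a g ^ n ∂μ := by
  obtain ⟨u', huu', hu'a⟩ := exists_between hua
  set U := {g | u' < a g}
  have hU : IsOpen U := isOpen_lt continuous_const ha
  have hμU : 0 < μ.real U :=
    ENNReal.toReal_pos (hU.measure_pos μ ⟨g₀, hu'a⟩).ne' (measure_ne_top μ U)
  obtain ⟨m, hm⟩ := exists_mul_pow_lt_mul_pow (a := μ.real Set.univ) hμU
    (sq_nonneg u) (pow_lt_pow_left₀ huu' hu two_ne_zero)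
  refine ⟨2 * m, ?_⟩
  have hint : Integrable (fun g => a g ^ (2 * m)) μ :=
    (ha.pow _).integrable_of_hasCompactSupport (.of_compactSpace _)
  calc μ.real Set.univ * u ^ (2 * m) < u' ^ (2 * m) * μ.real U := by
        rw [pow_mul, pow_mul, mul_comm _ (μ.real U)]; exact hm
    _ ≤ ∫ g in U, a g ^ (2 * m) ∂μ :=
        setIntegral_ge_of_const_le_real hU.measurableSet (measure_ne_top μ U)
          (fun g hg => pow_le_pow_left₀ (hu.trans huu'.le) (le_of_lt hg) _) hint.integrableOn
    _ ≤ ∫ g, a g ^ (2 * m) ∂μ :=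
        setIntegral_le_integral hint (ae_of_all _ fun g => (even_two_mul m).pow_nonneg _)

end Averaging

/-- Let `X` be a real Banach space, `G` a compact topological group acting
separately continuously on `X` by invertible continuous linear operators via `ρ`, and
`K ⊆ X` a nonempty closed convex balanced `G`-invariant set. Then every `z ∉ K` can be
separated from `K` by a homogeneous `G`-invariant continuous polynomial. -/
theorem statement1 {X : Type*} [NormedAddCommGroup X] [NormedSpace ℝ X] [CompleteSpace X]
    {G : Type*} [Group G] [TopologicalSpace G] [IsTopologicalGroup G] [CompactSpace G]
    (ρ : G →* (X ≃L[ℝ] X)) (hρ : ∀ x : X, Continuous fun g : G => (ρ g) x)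
    (K : Set X) (hKne : K.Nonempty) (hKcl : IsClosed K) (hKcv : Convex ℝ K)
    (hKbal : Balanced ℝ K)
    (hK : ∀ (g : G), ∀ x ∈ K, (ρ g) x ∈ K)
    (z : X) (hz : z ∉ K) :
    ∃ (m : ℕ) (P : X → ℝ), IsHomogeneousPolynomial ℝ m P ∧
      (∀ (g : G) (x : X), P ((ρ g) x) = P x) ∧
      ∃ c, c < ‖P z‖ ∧ ∀ w ∈ K, ‖P w‖ ≤ c := by
  borelize G
  obtain ⟨f, u, hfK, hfz⟩ := hKbal.exists_abs_le_lt_of_notMem hKcv hKcl hz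
  have hu : 0 ≤ u := (abs_nonneg _).trans (hfK _ hKne.some_mem)
  let φ : G → StrongDual ℝ X := fun g => f.comp (ρ g⁻¹ : X →L[ℝ] X)
  have hφ : ∀ x, Continuous fun g => φ g x := fun x =>
    f.continuous.comp ((hρ x).comp continuous_inv)
  have hφK : ∀ w ∈ K, ∀ g, |φ g w| ≤ u := fun w hw g => hfK _ (hK g⁻¹ w hw)
  have hφ_shift : ∀ h x g, φ (h⁻¹ * g) x = φ g (ρ h x) := fun h x g => by
    simp [φ, mul_inv_rev, map_mul]
  obtain ⟨n, hn⟩ := exists_mul_pow_lt_integral_pow Measure.haar (hφ z) hu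
    (g₀ := 1) (by simpa [φ] using hfz)
  refine ⟨n, fun x => ∫ g, φ g x ^ n ∂Measure.haar,
    isHomogeneousPolynomial_integral_pow _ hφ n, fun h x => ?_,
    _, hn.trans_le (le_abs_self _), fun w hw => norm_integral_pow_le _ (hφK w hw) n⟩
  simp only [← hφ_shift]
  exact integral_mul_left_eq_self (fun g => φ g x ^ n) h⁻¹
end

section
/- Let 1 ≤ p < ∞ and let X = ℓ^p(A₀) be the Banach space of p-summable complex sequences indexed by A₀ = ℤ \ {0}. Suppose z = (z_j)_{j ∈ A₀} ∈ X satisfies either (there exists j₀ ≥ 1 with |z_{j₀}| > 1 and |z_j| ≤ 1 for every j ≤ −1) or (there exists j₀ ≤ −1 with |z_{j₀}| > 1 and |z_j| ≤ 1 for every j ≥ 1). Then there exists a natural number k with k ≥ p such that the supersymmetric polynomial T_k(x) = ∑_{j≥1} x_j^k − ∑_{j≤−1} x_j^k (both series converging absolutely for k ≥ p) separates z from the closed unit ball of X: |T_k(z)| > 1 and |T_k(x)| ≤ 1 for every x ∈ X with ‖x‖_p ≤ 1. -/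
/-!
The coordinates of `z` of modulus `> 1` form a finite set `B`, all on one side of `0`, so on `B`
the signs in `T_k` agree. By simultaneous Dirichlet approximation (compactness of the torus
`(S¹)^B`) there are arbitrarily large `k` for which all the phases `(z_j / |z_j|)^k`, `j ∈ B`, lie
within `1/2` of `1`; then `|∑_{j ∈ B} z_j^k| ≥ Re ∑_{j ∈ B} z_j^k ≥ |z_{j₀}|^k / 2`, which grows
without bound, while the remaining terms have modulus `≤ 1` and contribute at most
`∑_j |z_j|^p = ‖z‖^p`. On the unit ball, `|T_k(x)| ≤ ∑_j |x_j|^k ≤ ∑_j |x_j|^p ≤ 1` for `k ≥ p`.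
-/

open scoped ENNReal

/-- The index set `A₀ = ℤ \ {0}`. -/
def NonzeroInt : Type := {j : ℤ // j ≠ 0}

instance : DecidableEq NonzeroInt := fun a b =>
  decidable_of_iff (a.1 = b.1) Subtype.ext_iff.symm

open Filter

theorem frequently_forall_norm_pow_sub_one_lt {ι : Type*} [Fintype ι] {w : ι → ℂ}
    (hw : ∀ i, ‖w i‖ = 1) {ε : ℝ} (hε : 0 < ε) :
    ∃ᶠ k in atTop, ∀ i, ‖w i ^ k - 1‖ < ε := by
  have hbdd : ∀ k : ℕ, w ^ k ∈ Metric.closedBall (0 : ι → ℂ) 1 := fun k => by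
    rw [mem_closedBall_zero_iff, pi_norm_le_iff_of_nonneg zero_le_one]
    intro i
    simp [hw]
  obtain ⟨_, -, φ, hφ, hlim⟩ := (isCompact_closedBall _ _).tendsto_subseq hbdd
  obtain ⟨N, hN⟩ := Metric.cauchySeq_iff.1 hlim.cauchySeq ε hε
  -- `w ^ m` and `w ^ (m + d)` are close for `m = φ N`, and multiplying by `w ^ m` is an isometry.
  refine frequently_atTop.2 fun K => ?_
  have hKle : φ N + K ≤ φ (φ N + K) := hφ.id_le _
  have hNle : N ≤ φ N := hφ.id_le N
  obtain ⟨d, hd⟩ : ∃ d, φ (φ N + K) = φ N + d :=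
    Nat.exists_eq_add_of_le (hφ.monotone (by omega))
  refine ⟨d, by omega, fun i => ?_⟩
  have hdist := hN (φ N + K) (by omega) N le_rfl
  simp only [Function.comp_apply, hd, dist_eq_norm] at hdist
  calc ‖w i ^ d - 1‖ = ‖(w ^ (φ N + d) - w ^ φ N) i‖ := by
        rw [Pi.sub_apply, Pi.pow_apply, Pi.pow_apply, pow_add, ← mul_sub_one, norm_mul,
          norm_pow, hw, one_pow, one_mul]
    _ ≤ ‖w ^ (φ N + d) - w ^ φ N‖ := norm_le_pi_norm _ i
    _ < ε := hdist

theorem Complex.norm_pow_div_two_le_re_pow {z : ℂ} {k : ℕ}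
    (h : ‖(z / ‖z‖) ^ k - 1‖ < 1 / 2) : ‖z‖ ^ k / 2 ≤ (z ^ k).re := by
  have hpolar : z = ‖z‖ * (z / ‖z‖) := by
    rcases eq_or_ne z 0 with rfl | hz
    · simp
    · rw [mul_div_cancel₀ _ (ofReal_ne_zero.2 (norm_ne_zero_iff.2 hz))]
  have hre : 1 / 2 ≤ ((z / ‖z‖) ^ k).re := by
    have := (abs_re_le_norm _).trans h.le
    rw [sub_re, one_re] at this
    linarith [(abs_le.1 this).1]
  calc ‖z‖ ^ k / 2 = ‖z‖ ^ k * (1 / 2) := by ring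
    _ ≤ ‖z‖ ^ k * ((z / ‖z‖) ^ k).re := by gcongr
    _ = (z ^ k).re := by
      conv_rhs => rw [hpolar]
      rw [mul_pow, ← ofReal_pow, re_ofReal_mul]

theorem norm_pow_div_two_le_norm_sum_pow {ι : Type*} {s : Finset ι} {z : ι → ℂ} {k : ℕ}
    (hk : ∀ i ∈ s, ‖(z i / ‖z i‖) ^ k - 1‖ < 1 / 2) {j : ι} (hj : j ∈ s) :
    ‖z j‖ ^ k / 2 ≤ ‖∑ i ∈ s, z i ^ k‖ :=
  calc ‖z j‖ ^ k / 2 ≤ (z j ^ k).re := Complex.norm_pow_div_two_le_re_pow (hk j hj)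
    _ ≤ ∑ i ∈ s, (z i ^ k).re := Finset.single_le_sum
        (fun i hi => (by positivity : (0 : ℝ) ≤ ‖z i‖ ^ k / 2).trans
          (Complex.norm_pow_div_two_le_re_pow (hk i hi))) hj
    _ = (∑ i ∈ s, z i ^ k).re := (Complex.re_sum _ _).symm
    _ ≤ ‖∑ i ∈ s, z i ^ k‖ := Complex.re_le_norm _

section SignedSums

variable {ι E : Type*} [SeminormedAddCommGroup E] (P : ι → Prop) [DecidablePred P]

theorem norm_ite_neg (i : ι) (a : E) : ‖if P i then a else -a‖ = ‖a‖ := by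
  split_ifs
  exacts [rfl, norm_neg a]

theorem norm_sum_ite_neg {s : Finset ι} (f : ι → E) (hs : (∀ i ∈ s, P i) ∨ ∀ i ∈ s, ¬P i) :
    ‖∑ i ∈ s, if P i then f i else -f i‖ = ‖∑ i ∈ s, f i‖ := by
  rcases hs with hs | hs
  · rw [Finset.sum_congr rfl fun i hi => if_pos (hs i hi)]
  · rw [Finset.sum_congr rfl fun i hi => if_neg (hs i hi), Finset.sum_neg_distrib, norm_neg]

theorem norm_tsum_ite_neg_le {f : ι → E} (hf : Summable fun i => ‖f i‖) :
    ‖∑' i, if P i then f i else -f i‖ ≤ ∑' i, ‖f i‖ := by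
  have hf' : Summable fun i => ‖if P i then f i else -f i‖ := by simpa only [norm_ite_neg] using hf
  simpa only [norm_ite_neg] using norm_tsum_le_tsum_norm hf'

end SignedSums

theorem ENNReal.eventually_le_natCast {p : ℝ≥0∞} (hp : p ≠ ∞) : ∀ᶠ k : ℕ in atTop, p ≤ k :=
  (ENNReal.tendsto_nat_nhds_top.eventually_const_lt hp.lt_top).mono fun _ h => h.le

theorem ENNReal.toReal_le_natCast {p : ℝ≥0∞} {k : ℕ} (hk : p ≤ k) : p.toReal ≤ k := by
  simpa using ENNReal.toReal_mono (ENNReal.natCast_ne_top k) hk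

section Lp

variable {α : Type*} {E : α → Type*} [∀ i, NormedAddCommGroup (E i)] {p : ℝ≥0∞}

theorem Memℓp.finite_setOf_one_lt_norm {f : ∀ i, E i} (hf : Memℓp f p) (hp : 0 < p.toReal) :
    {i | 1 < ‖f i‖}.Finite := by
  refine (eventually_cofinite.1
    ((hf.summable hp).tendsto_cofinite_zero.eventually_lt_const one_pos)).subset fun i hi => ?_
  exact not_lt.2 (Real.one_lt_rpow hi hp).le

theorem Memℓp.summable_norm_pow {f : ∀ i, E i} (hf : Memℓp f p) (hp : 0 < p.toReal) {k : ℕ}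
    (hk : p ≤ k) : Summable fun i => ‖f i‖ ^ k := by
  simpa [Real.rpow_natCast] using (hf.of_exponent_ge hk).summable
    (by simpa using hp.trans_le (ENNReal.toReal_le_natCast hk))

theorem lp.tsum_norm_pow_le_rpow_norm (hp : 0 < p.toReal) (x : lp E p) {k : ℕ} (hk : p ≤ k)
    (s : Set α) (hs : ∀ i ∈ s, ‖x i‖ ≤ 1) : ∑' i : s, ‖x i‖ ^ k ≤ ‖x‖ ^ p.toReal := by
  have hsum := (lp.memℓp x).summable hp
  calc ∑' i : s, ‖x i‖ ^ k ≤ ∑' i : s, ‖x i‖ ^ p.toReal := by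
        refine Summable.tsum_le_tsum (fun i => ?_)
          (((lp.memℓp x).summable_norm_pow hp hk).subtype s) (hsum.subtype s)
        rw [← Real.rpow_natCast]
        exact Real.rpow_le_rpow_of_exponent_ge' (norm_nonneg _) (hs i i.2) hp.le
          (ENNReal.toReal_le_natCast hk)
    _ ≤ ∑' i, ‖x i‖ ^ p.toReal := hsum.tsum_subtype_le _ s fun _ => by positivity
    _ = ‖x‖ ^ p.toReal := (lp.norm_rpow_eq_tsum hp x).symm

variable (P : α → Prop) [DecidablePred P]

theorem lp.summable_and_norm_tsum_ite_neg_pow_le_one (hp : 0 < p.toReal)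
    (x : lp (fun _ : α => ℂ) p) (hx : ‖x‖ ≤ 1) {k : ℕ} (hk : p ≤ k) :
    Summable (fun i => ‖x i ^ k‖) ∧ ‖∑' i, if P i then x i ^ k else -(x i ^ k)‖ ≤ 1 := by
  have hsum : Summable fun i => ‖x i ^ k‖ := by
    simpa only [norm_pow] using (lp.memℓp x).summable_norm_pow hp hk
  refine ⟨hsum, (norm_tsum_ite_neg_le P hsum).trans ?_⟩
  calc ∑' i, ‖x i ^ k‖ = ∑' i : (Set.univ : Set α), ‖x i‖ ^ k := by
        simp only [norm_pow]
        exact (tsum_univ _).symm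
    _ ≤ ‖x‖ ^ p.toReal := lp.tsum_norm_pow_le_rpow_norm hp x hk _ fun i _ =>
        (lp.norm_apply_le_norm (ENNReal.toReal_pos_iff.1 hp).1.ne' x i).trans hx
    _ ≤ 1 := Real.rpow_le_one (lp.norm_nonneg' x) hx hp.le

theorem lp.frequently_one_lt_norm_tsum_ite_neg_pow (hp : 0 < p.toReal)
    (z : lp (fun _ : α => ℂ) p) {j₀ : α} (hj₀ : 1 < ‖z j₀‖)
    (hside : (∀ i, 1 < ‖z i‖ → P i) ∨ ∀ i, 1 < ‖z i‖ → ¬P i) :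
    ∃ᶠ k in atTop, 1 < ‖∑' i, if P i then z i ^ k else -(z i ^ k)‖ := by
  have hfin := (lp.memℓp z).finite_setOf_one_lt_norm hp
  set B := hfin.toFinset
  have hphase := frequently_forall_norm_pow_sub_one_lt (w := fun i : B => z i / ‖z i‖)
    (fun i => by
      have h0 : ‖z i‖ ≠ 0 := (one_pos.trans (hfin.mem_toFinset.1 i.2)).ne'
      simp [h0]) one_half_pos
  have hlarge := ((tendsto_pow_atTop_atTop_of_one_lt hj₀).eventually_gt_atTop
    (2 * (‖z‖ ^ p.toReal + 1))).and (ENNReal.eventually_le_natCast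
      (ENNReal.toReal_pos_iff.1 hp).2.ne)
  refine (hphase.and_eventually hlarge).mono fun k ⟨hclose, hbig, hpk⟩ => ?_
  have hsum : Summable fun i => ‖z i ^ k‖ := by
    simpa only [norm_pow] using (lp.memℓp z).summable_norm_pow hp hpk
  have hhead : ‖z j₀‖ ^ k / 2 ≤ ‖∑ i ∈ B, if P i then z i ^ k else -(z i ^ k)‖ := by
    rw [norm_sum_ite_neg P _ (hside.imp (fun h i hi => h i (hfin.mem_toFinset.1 hi))
      (fun h i hi => h i (hfin.mem_toFinset.1 hi)))]
    exact norm_pow_div_two_le_norm_sum_pow (fun i hi => hclose ⟨i, hi⟩) (hfin.mem_toFinset.2 hj₀)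
  have htail : ‖∑' i : ↑(↑B : Set α)ᶜ, if P i then z i ^ k else -(z i ^ k)‖
      ≤ ‖z‖ ^ p.toReal := by
    refine (norm_tsum_ite_neg_le (fun i : ↑(↑B : Set α)ᶜ => P i) (hsum.subtype _)).trans ?_
    simpa only [norm_pow] using lp.tsum_norm_pow_le_rpow_norm hp z hpk _ fun i hi =>
      le_of_not_gt fun h => Set.notMem_of_mem_compl hi (hfin.mem_toFinset.2 h)
  have hsigned : Summable fun i => if P i then z i ^ k else -(z i ^ k) :=
    Summable.of_norm (by simpa only [norm_ite_neg] using hsum)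
  rw [← hsigned.sum_add_tsum_compl (s := B)]
  linarith [norm_le_add_norm_add (∑ i ∈ B, if P i then z i ^ k else -(z i ^ k))
    (∑' i : ↑(↑B : Set α)ᶜ, if P i then z i ^ k else -(z i ^ k))]

end Lp

/-- Let `1 ≤ p < ∞` and `X = ℓ^p(A₀)` with `A₀ = ℤ \ {0}`. If
`z ∈ X` has some coordinate of modulus `> 1` on the positive side while all negative
coordinates have modulus `≤ 1` (or vice versa), then some supersymmetric polynomial
`T_k(x) = ∑_{j ≥ 1} x_j^k − ∑_{j ≤ −1} x_j^k` with `k ≥ p` (both series converging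
absolutely) separates `z` from the closed unit ball: `|T_k(z)| > 1` and `|T_k(x)| ≤ 1`
whenever `‖x‖ ≤ 1`. -/
theorem statement16 (p : ℝ≥0∞) [Fact (1 ≤ p)] (hp : p ≠ ∞)
    (z : lp (fun _ : NonzeroInt => ℂ) p)
    (hz : (∃ j₀ : NonzeroInt, 0 < j₀.1 ∧ 1 < ‖z j₀‖ ∧ ∀ j : NonzeroInt, j.1 < 0 → ‖z j‖ ≤ 1) ∨
      (∃ j₀ : NonzeroInt, j₀.1 < 0 ∧ 1 < ‖z j₀‖ ∧ ∀ j : NonzeroInt, 0 < j.1 → ‖z j‖ ≤ 1)) :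
    ∃ k : ℕ, p ≤ (k : ℝ≥0∞) ∧
      Summable (fun j : NonzeroInt => ‖(z j) ^ k‖) ∧
      1 < ‖∑' j : NonzeroInt, (if 0 < j.1 then (z j) ^ k else -((z j) ^ k))‖ ∧
      ∀ x : lp (fun _ : NonzeroInt => ℂ) p, ‖x‖ ≤ 1 →
        Summable (fun j : NonzeroInt => ‖(x j) ^ k‖) ∧
        ‖∑' j : NonzeroInt, (if 0 < j.1 then (x j) ^ k else -((x j) ^ k))‖ ≤ 1 := by
  have hp0 : 0 < p.toReal :=
    ENNReal.toReal_pos (one_pos.trans_le (Fact.out : (1 : ℝ≥0∞) ≤ p)).ne' hp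
  obtain ⟨j₀, hj₀, hside⟩ : ∃ j₀ : NonzeroInt, 1 < ‖z j₀‖ ∧
      ((∀ j : NonzeroInt, 1 < ‖z j‖ → 0 < j.1) ∨ ∀ j : NonzeroInt, 1 < ‖z j‖ → ¬0 < j.1) := by
    rcases hz with ⟨j₀, -, hj₀, hneg⟩ | ⟨j₀, -, hj₀, hpos⟩
    · exact ⟨j₀, hj₀, .inl fun j hj => lt_of_not_ge fun h => (hneg j (h.lt_of_ne j.2)).not_gt hj⟩
    · exact ⟨j₀, hj₀, .inr fun j hj h => (hpos j h).not_gt hj⟩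
  obtain ⟨k, hk, hpk⟩ := ((lp.frequently_one_lt_norm_tsum_ite_neg_pow _ hp0 z hj₀
    hside).and_eventually (ENNReal.eventually_le_natCast hp)).exists
  refine ⟨k, hpk, ?_, hk, fun x hx => lp.summable_and_norm_tsum_ite_neg_pow_le_one _ hp0 x hx hpk⟩
  simpa only [norm_pow] using (lp.memℓp z).summable_norm_pow hp0 hpk
end
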